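/- For any continuous v on [-1,1], the coefficient of L_k in the Legendre expansion of v − P^+ v equals (−1)^{k+1} v(−1) + (1/2) ∫_{-1}^1 v(s) Σ_{m=0}^{k} (−1)^{k+m} (2m+1) L_m(s) ds, where P^+ is the degree-k left Gauss–Radau projection. -/

import Mathlib

/-!
Write `K = ∑_{m ≤ k} (-1)^(k+m) (2m+1) L_m` and split `∫ v K = ∫ (v - p) K + ∫ p K`.
The defect `v - p` is orthogonal to polynomials of degree `< k`, so only the `L_k` term of
`∫ (v - p) K` survives. Rodrigues' formula gives `L'_{m+2} = L'_m + (2m+3) L_{m+1}`, which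
telescopes to `K = (L_{k+1} - L_k)'`; integrating `∫ p K` by parts, `p'` is orthogonal to
`L_k` and `L_{k+1}`, and since `L_m(1) = 1`, `L_m(-1) = (-1)^m` only the boundary term
`2 (-1)^k p(-1) = 2 (-1)^k v(-1)` remains.
-/

open Polynomial Finset

/-- Legendre polynomial of degree `m` on `[-1,1]`, normalized so `L_m(1) = 1`. -/
noncomputable def leg (m : ℕ) : Polynomial ℝ :=
  Polynomial.C (((2 : ℝ) ^ m * Nat.factorial m)⁻¹) *
    (fun p => Polynomial.derivative p)^[m] ((Polynomial.X ^ 2 - 1) ^ m)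

/-- Degree-`k` left Gauss–Radau projection on `[-1,1]`. -/
def IsRadauPos (k : ℕ) (v : ℝ → ℝ) (p : Polynomial ℝ) : Prop :=
  p.natDegree ≤ k ∧
  (∀ w : Polynomial ℝ, w.natDegree + 1 ≤ k →
    ∫ s in (-1 : ℝ)..1, (v s - p.eval s) * w.eval s = 0) ∧
  p.eval (-1) = v (-1)

section SqSubOnePow

variable {R : Type*} [CommRing R]

theorem derivative_sq_sub_one_pow_succ (n : ℕ) :
    derivative ((X ^ 2 - 1 : R[X]) ^ (n + 1)) =
      ((2 * (n + 1) : ℕ) : R[X]) * ((X ^ 2 - 1) ^ n * X) := by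
  simp only [derivative_pow, derivative_sub, derivative_X, derivative_one, C_eq_natCast]
  push_cast
  ring

theorem iterate_derivative_two_sq_sub_one_pow_add_two (n : ℕ) :
    derivative^[2] ((X ^ 2 - 1 : R[X]) ^ (n + 2)) =
      ((2 * (n + 2) * (2 * n + 3) : ℕ) : R[X]) * (X ^ 2 - 1) ^ (n + 1) +
        ((4 * (n + 1) * (n + 2) : ℕ) : R[X]) * (X ^ 2 - 1) ^ n := by
  simp only [Function.iterate_succ_apply, Function.iterate_zero_apply,
    derivative_sq_sub_one_pow_succ, derivative_mul, derivative_natCast, derivative_X]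
  push_cast
  ring

theorem isRoot_iterate_derivative_pow {q : R[X]} {x : R} (hx : q.IsRoot x) {j n : ℕ}
    (hj : j < n) : (derivative^[j] (q ^ n)).IsRoot x := by
  obtain ⟨r, hr⟩ := pow_sub_dvd_iterate_derivative_pow q n j
  rw [hr, IsRoot, eval_mul, eval_pow, hx.eq_zero, zero_pow (Nat.sub_ne_zero_of_lt hj), zero_mul]

theorem eval_iterate_derivative_sq_sub_one_pow {x : R} (hx : x ^ 2 = 1) (n : ℕ) :
    (derivative^[n] ((X ^ 2 - 1 : R[X]) ^ n)).eval x = (2 * x) ^ n * n.factorial := by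
  have hroot : (X ^ 2 - 1 : R[X]).IsRoot x := by simp [hx]
  induction n with
  | zero => simp
  | succ n ih =>
    have hlow : (n : R) * (derivative^[n - 1] ((X ^ 2 - 1 : R[X]) ^ n)).eval x = 0 := by
      rcases n with _ | n
      · simp
      · rw [(isRoot_iterate_derivative_pow hroot (by omega)).eq_zero, mul_zero]
    rw [Function.iterate_succ_apply, derivative_sq_sub_one_pow_succ,
      iterate_derivative_natCast_mul, iterate_derivative_mul_X]
    simp only [eval_mul, eval_add, eval_natCast, eval_X, nsmul_eq_mul, ih, hlow,
      Nat.factorial_succ]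
    push_cast
    ring

end SqSubOnePow

theorem leg_eq (n : ℕ) :
    leg n = C (((2 : ℝ) ^ n * n.factorial)⁻¹) * derivative^[n] ((X ^ 2 - 1) ^ n) := rfl

theorem eval_leg_of_sq_eq_one {x : ℝ} (hx : x ^ 2 = 1) (n : ℕ) : (leg n).eval x = x ^ n := by
  rw [leg_eq, eval_mul, eval_C, eval_iterate_derivative_sq_sub_one_pow hx, mul_pow]
  field_simp

theorem natDegree_leg_le (n : ℕ) : (leg n).natDegree ≤ n := by
  have hφ : ((X ^ 2 - 1 : ℝ[X]) ^ n).natDegree ≤ n * 2 :=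
    natDegree_pow_le_of_le n (by compute_degree)
  calc (leg n).natDegree ≤ (derivative^[n] ((X ^ 2 - 1 : ℝ[X]) ^ n)).natDegree :=
        natDegree_C_mul_le _ _
    _ ≤ n * 2 - n := (natDegree_iterate_derivative _ n).trans (Nat.sub_le_sub_right hφ n)
    _ = n := by omega

theorem leg_zero : leg 0 = 1 := by
  rw [leg_eq]; simp

theorem leg_one : leg 1 = X := by
  rw [leg_eq]
  simp only [pow_one, Nat.factorial_one, Nat.cast_one, mul_one, Function.iterate_one,
    derivative_sub, derivative_X_pow_succ, map_add, map_one, derivative_one, sub_zero]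
  rw [one_add_one_eq_two, ← C_ofNat, ← mul_assoc, ← C_mul]
  norm_num

theorem derivative_leg_add_two (n : ℕ) :
    derivative (leg (n + 2)) = derivative (leg n) + C (2 * n + 3 : ℝ) * leg (n + 1) := by
  simp only [leg_eq, derivative_C_mul, ← Function.iterate_succ_apply' derivative,
    Nat.succ_eq_add_one]
  rw [show n + 2 + 1 = n + 1 + 2 by ring, Function.iterate_add_apply,
    iterate_derivative_two_sq_sub_one_pow_add_two, iterate_map_add,
    iterate_derivative_natCast_mul, iterate_derivative_natCast_mul, ← map_natCast C,
    ← map_natCast C, mul_add, ← mul_assoc, ← mul_assoc, ← map_mul, ← map_mul]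
  have h1 : ((2 : ℝ) ^ (n + 2) * (n + 2).factorial)⁻¹ * (2 * (n + 2) * (2 * n + 3) : ℕ) =
      (2 * n + 3) * ((2 : ℝ) ^ (n + 1) * (n + 1).factorial)⁻¹ := by
    simp only [Nat.factorial_succ]; push_cast; field_simp; ring
  have h2 : ((2 : ℝ) ^ (n + 2) * (n + 2).factorial)⁻¹ * (4 * (n + 1) * (n + 2) : ℕ) =
      ((2 : ℝ) ^ n * n.factorial)⁻¹ := by
    simp only [Nat.factorial_succ]; push_cast; field_simp; ring
  rw [h1, h2, map_mul]
  ring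

theorem sum_smul_leg_eq_derivative_sub (k : ℕ) :
    ∑ m ∈ range (k + 1), ((-1 : ℝ) ^ (k + m) * (2 * m + 1)) • leg m =
      derivative (leg (k + 1) - leg k) := by
  induction k with
  | zero => simp [leg_zero, leg_one]
  | succ k ih =>
    have hflip : ∀ m, ((-1 : ℝ) ^ (k + 1 + m) * (2 * m + 1)) • leg m =
        -(((-1 : ℝ) ^ (k + m) * (2 * m + 1)) • leg m) := by
      intro m
      rw [add_right_comm, pow_succ, mul_neg_one, neg_mul, neg_smul]
    rw [sum_range_succ, sum_congr rfl fun m _ => hflip m, sum_neg_distrib, ih,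
      derivative_sub, derivative_sub, derivative_leg_add_two, smul_eq_C_mul]
    have hlast : (-1 : ℝ) ^ (k + 1 + (k + 1)) * (2 * (k + 1 : ℕ) + 1) = 2 * k + 3 := by
      rw [← two_mul, pow_mul, neg_one_sq, one_pow]
      push_cast
      ring
    rw [hlast]
    abel

section Integration

open intervalIntegral

variable {a b : ℝ}

theorem integral_eval_mul_eval_derivative (p q : ℝ[X]) :
    ∫ s in a..b, p.eval s * (derivative q).eval s =
      p.eval b * q.eval b - p.eval a * q.eval a - ∫ s in a..b, (derivative p).eval s * q.eval s :=
  integral_mul_deriv_eq_deriv_mul (fun s _ => p.hasDerivAt s) (fun s _ => q.hasDerivAt s)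
    ((derivative p).continuous.intervalIntegrable _ _)
    ((derivative q).continuous.intervalIntegrable _ _)

theorem integral_eval_mul_eval_iterate_derivative_eq_zero {q w : ℝ[X]} {j : ℕ}
    (hq : ∀ i < j, (derivative^[i] q).IsRoot a ∧ (derivative^[i] q).IsRoot b)
    (hw : derivative^[j] w = 0) :
    ∫ s in a..b, w.eval s * (derivative^[j] q).eval s = 0 := by
  induction j generalizing w with
  | zero => simp [show w = 0 from hw]
  | succ j ih =>
    obtain ⟨ha, hb⟩ := hq j j.lt_succ_self
    rw [Function.iterate_succ_apply', integral_eval_mul_eval_derivative, ha.eq_zero, hb.eq_zero,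
      ih (fun i hi => hq i (hi.trans j.lt_succ_self)) (by rwa [← Function.iterate_succ_apply])]
    ring

theorem integral_eval_mul_leg_eq_zero {w : ℝ[X]} {n : ℕ} (hw : derivative^[n] w = 0) :
    ∫ s in (-1 : ℝ)..1, w.eval s * (leg n).eval s = 0 := by
  have hroot : ∀ x : ℝ, x ^ 2 = 1 → (X ^ 2 - 1 : ℝ[X]).IsRoot x := fun x hx => by simp [hx]
  simp only [leg_eq, eval_mul, eval_C, mul_left_comm (w.eval _), integral_const_mul]
  rw [integral_eval_mul_eval_iterate_derivative_eq_zero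
    (fun i hi => ⟨isRoot_iterate_derivative_pow (hroot _ (by norm_num)) hi,
      isRoot_iterate_derivative_pow (hroot _ (by norm_num)) hi⟩) hw,
    mul_zero]

theorem integral_eval_mul_sum_leg {q : ℝ[X]} {k : ℕ} (hq : q.natDegree ≤ k) :
    ∫ s in (-1 : ℝ)..1, q.eval s *
        ∑ m ∈ range (k + 1), (-1 : ℝ) ^ (k + m) * (2 * m + 1) * (leg m).eval s =
      2 * (-1) ^ k * q.eval (-1) := by
  have hsum : ∀ s, ∑ m ∈ range (k + 1), (-1 : ℝ) ^ (k + m) * (2 * m + 1) * (leg m).eval s =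
      (derivative (leg (k + 1) - leg k)).eval s := fun s => by
    rw [← sum_smul_leg_eq_derivative_sub, eval_finsetSum]
    simp only [eval_smul, smul_eq_mul]
  have hdq : ∀ n, k ≤ n → derivative^[n] (derivative q) = 0 := fun n hn => by
    rw [← Function.iterate_succ_apply]
    exact iterate_derivative_eq_zero (by omega)
  have horth : ∫ s in (-1 : ℝ)..1, (derivative q).eval s * (leg (k + 1) - leg k).eval s = 0 := by
    simp only [eval_sub, mul_sub]
    rw [integral_sub (Continuous.intervalIntegrable (by fun_prop) _ _)
      (Continuous.intervalIntegrable (by fun_prop) _ _),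
      integral_eval_mul_leg_eq_zero (hdq _ k.le_succ), integral_eval_mul_leg_eq_zero (hdq _ le_rfl),
      sub_zero]
  simp only [hsum]
  rw [integral_eval_mul_eval_derivative, horth]
  simp only [eval_sub, eval_leg_of_sq_eq_one (one_pow 2),
    eval_leg_of_sq_eq_one (neg_one_sq (R := ℝ)), one_pow, pow_succ]
  ring

theorem integral_mul_sum_range_succ_of_orthogonal {f : ℝ → ℝ} {g : ℕ → ℝ → ℝ} (c : ℕ → ℝ)
    {k : ℕ} (hint : ∀ m, IntervalIntegrable (fun s => f s * g m s) MeasureTheory.volume a b)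
    (horth : ∀ m < k, ∫ s in a..b, f s * g m s = 0) :
    ∫ s in a..b, f s * ∑ m ∈ range (k + 1), c m * g m s = c k * ∫ s in a..b, f s * g k s := by
  simp only [mul_sum, mul_left_comm (f _)]
  rw [integral_finsetSum fun m _ => (hint m).const_mul (c m), sum_range_succ,
    sum_eq_zero fun m hm => by rw [integral_const_mul, horth m (mem_range.mp hm), mul_zero],
    zero_add, integral_const_mul]

end Integration

theorem radau_pos_defect_coefficient (k : ℕ) (v : ℝ → ℝ)
    (hv : ContinuousOn v (Set.Icc (-1 : ℝ) 1)) (p : Polynomial ℝ)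
    (hp : IsRadauPos k v p) :
    (2 * k + 1) / 2 * (∫ s in (-1 : ℝ)..1, (v s - p.eval s) * (leg k).eval s) =
      (-1 : ℝ) ^ (k + 1) * v (-1) + (1 / 2) * ∫ s in (-1 : ℝ)..1,
        v s * ∑ m ∈ Finset.range (k + 1), (-1 : ℝ) ^ (k + m) * (2 * m + 1 : ℝ) * (leg m).eval s := by
  obtain ⟨hdeg, horth, hbc⟩ := hp
  set K := fun s => ∑ m ∈ range (k + 1), (-1 : ℝ) ^ (k + m) * (2 * m + 1 : ℝ) * (leg m).eval s
  have hdefect_cont : ContinuousOn (fun s => v s - p.eval s) (Set.uIcc (-1) 1) := by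
    rw [Set.uIcc_of_le (by norm_num)]
    exact hv.sub p.continuous.continuousOn
  have hint : ∀ g : ℝ → ℝ, Continuous g →
      IntervalIntegrable (fun s => (v s - p.eval s) * g s) MeasureTheory.volume (-1) 1 :=
    fun g hg => (hdefect_cont.mul hg.continuousOn).intervalIntegrable
  have hsplit : ∫ s in (-1 : ℝ)..1, v s * K s =
      (∫ s in (-1 : ℝ)..1, (v s - p.eval s) * K s) + ∫ s in (-1 : ℝ)..1, p.eval s * K s := by
    rw [← intervalIntegral.integral_add (hint K (by fun_prop))
      (Continuous.intervalIntegrable (by fun_prop) _ _)]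
    simp only [sub_mul, sub_add_cancel]
  have hdefect_coeff := integral_mul_sum_range_succ_of_orthogonal
    (fun m => (-1 : ℝ) ^ (k + m) * (2 * m + 1)) (fun m => hint _ (leg m).continuous)
    (fun m hm => horth (leg m) ((natDegree_leg_le m).trans_lt hm))
  rw [hsplit, hdefect_coeff, integral_eval_mul_sum_leg hdeg, hbc, ← two_mul, pow_mul,
    neg_one_sq, one_pow, pow_succ]
  ring
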